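/- Let (V,Q) be a finite-dimensional real symplectic vector space and γ ∈ V with γ ≠ 0. In V ⊕ V with the symplectic form Q ⊕ −Q, let A = graph(T_γ), B = graph(id) (the diagonal), and let C be any Lagrangian subspace of V ⊕ V. Then Wall's space W = (B ∩ (C + A)) / ((B ∩ C) + (B ∩ A)) has dimension at most 1. -/

import Mathlib

/-!
On the diagonal `B`, the transvection `T_γ` fixes `(x, x)` whenever `Q(γ, x) = 0`. So `B ∩ A`,
and with it `(B ∩ C) + (B ∩ A)`, contains the kernel of the functional `(x, x) ↦ Q(γ, x)` on
`B ∩ (C + A)`, and a quotient by a subspace containing the kernel of a linear functional has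
dimension at most `1`.
-/

/-- The symplectic transvection along `γ`: `v ↦ v + Q(γ,v)·γ`. -/
def symplTransvection {V : Type*} [AddCommGroup V] [Module ℝ V]
    (Q : V →ₗ[ℝ] V →ₗ[ℝ] ℝ) (γ : V) : V →ₗ[ℝ] V :=
  LinearMap.id + (Q γ).smulRight γ

open Module LinearMap

theorem LinearMap.finrank_quotient_le_one_of_ker_le {K M : Type*} [Field K] [AddCommGroup M]
    [Module K M] (f : M →ₗ[K] K) {N : Submodule K M} (h : ker f ≤ N) :
    finrank K (M ⧸ N) ≤ 1 :=
  have : Module.Finite K (M ⧸ ker f) := .equiv f.quotKerEquivRange.symm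
  calc finrank K (M ⧸ N)
      ≤ finrank K (M ⧸ ker f) := finrank_le_finrank_of_surjective (Submodule.factor_surjective h)
    _ = finrank K (range f) := f.quotKerEquivRange.finrank_eq
    _ ≤ finrank K K := Submodule.finrank_le _
    _ = 1 := finrank_self K

theorem Submodule.finrank_quotient_comap_subtype_le_one {K M : Type*} [Field K] [AddCommGroup M]
    [Module K M] {S N : Submodule K M} (f : M →ₗ[K] K) (h : S ⊓ ker f ≤ N) :
    finrank K (S ⧸ N.comap S.subtype) ≤ 1 :=
  (f.comp S.subtype).finrank_quotient_le_one_of_ker_le fun x hx => h ⟨x.2, hx⟩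

theorem symplTransvection_apply {V : Type*} [AddCommGroup V] [Module ℝ V]
    (Q : V →ₗ[ℝ] V →ₗ[ℝ] ℝ) (γ x : V) : symplTransvection Q γ x = x + Q γ x • γ :=
  rfl

theorem graph_id_inf_ker_le_graph_symplTransvection {V : Type*} [AddCommGroup V] [Module ℝ V]
    (Q : V →ₗ[ℝ] V →ₗ[ℝ] ℝ) (γ : V) :
    graph (LinearMap.id : V →ₗ[ℝ] V) ⊓ ker ((Q γ).comp (fst ℝ V V)) ≤
      graph (symplTransvection Q γ) := by
  intro p hp
  obtain ⟨hpB, hpγ⟩ := Submodule.mem_inf.mp hp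
  rw [mem_graph_iff, id_apply] at hpB
  rw [mem_ker, comp_apply, fst_apply] at hpγ
  rw [mem_graph_iff, symplTransvection_apply, hpγ, zero_smul, add_zero, hpB]

theorem stmt_17_general {V : Type*} [AddCommGroup V] [Module ℝ V]
    (Q : V →ₗ[ℝ] V →ₗ[ℝ] ℝ)
    (γ : V)
    (C : Submodule ℝ (V × V)) :
    Module.finrank ℝ
      (↥(LinearMap.graph (LinearMap.id : V →ₗ[ℝ] V) ⊓
          (C ⊔ LinearMap.graph (symplTransvection Q γ))) ⧸
        Submodule.comap
          (LinearMap.graph (LinearMap.id : V →ₗ[ℝ] V) ⊓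
            (C ⊔ LinearMap.graph (symplTransvection Q γ))).subtype
          ((LinearMap.graph (LinearMap.id : V →ₗ[ℝ] V) ⊓ C) ⊔
            (LinearMap.graph (LinearMap.id : V →ₗ[ℝ] V) ⊓
              LinearMap.graph (symplTransvection Q γ)))) ≤ 1 := by
  refine Submodule.finrank_quotient_comap_subtype_le_one ((Q γ).comp (fst ℝ V V)) ?_
  rintro p ⟨⟨hpB, -⟩, hpγ⟩
  exact Submodule.mem_sup_right
    ⟨hpB, graph_id_inf_ker_le_graph_symplTransvection Q γ ⟨hpB, hpγ⟩⟩

/-- For γ ≠ 0, A = graph(T_γ), B = graph(id) (the diagonal) in V ⊕ V with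
the form Q ⊕ −Q, and C any Lagrangian subspace of V ⊕ V, Wall's space
W = (B ∩ (C + A)) / ((B ∩ C) + (B ∩ A)) has dimension at most 1. -/
theorem stmt_17 {V : Type*} [AddCommGroup V] [Module ℝ V] [FiniteDimensional ℝ V]
    (Q : V →ₗ[ℝ] V →ₗ[ℝ] ℝ)
    (hAlt : ∀ x, Q x x = 0)
    (hNd : ∀ x, (∀ y, Q x y = 0) → x = 0)
    (γ : V) (hγ : γ ≠ 0)
    (C : Submodule ℝ (V × V))
    (hCiso : ∀ p ∈ C, ∀ q ∈ C, Q p.1 q.1 - Q p.2 q.2 = 0)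
    (hCdim : 2 * Module.finrank ℝ ↥C = Module.finrank ℝ (V × V)) :
    Module.finrank ℝ
      (↥(LinearMap.graph (LinearMap.id : V →ₗ[ℝ] V) ⊓
          (C ⊔ LinearMap.graph (symplTransvection Q γ))) ⧸
        Submodule.comap
          (LinearMap.graph (LinearMap.id : V →ₗ[ℝ] V) ⊓
            (C ⊔ LinearMap.graph (symplTransvection Q γ))).subtype
          ((LinearMap.graph (LinearMap.id : V →ₗ[ℝ] V) ⊓ C) ⊔
            (LinearMap.graph (LinearMap.id : V →ₗ[ℝ] V) ⊓
              LinearMap.graph (symplTransvection Q γ)))) ≤ 1 :=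
  stmt_17_general Q γ C
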